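/- Let L be an atomistic complete lattice (length ≥ 2). A t-norm T⋄ on L is left-semicontinuous if and only if there exists a t-norm T on C(L) such that T⋄ = T̄ and T(u,u) = 0 for every atom u ∈ A(⋁S) \ ⋃_{x∈S} A(x), for every subset S ⊆ L with ⋁S ≠ 1. -/

import Mathlib

def IsTnorm {L : Type*} [PartialOrder L] [BoundedOrder L] (T : L → L → L) : Prop :=
  (∀ x : L, Monotone (T x)) ∧ (∀ x y : L, T x y = T y x) ∧
  (∀ x y z : L, T x (T y z) = T (T x y) z) ∧ (∀ x : L, T x ⊤ = x)

open Classical in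
noncomputable def TD {L : Type*} [Lattice L] [BoundedOrder L] (x y : L) : L :=
  if x = ⊤ ∨ y = ⊤ then x ⊓ y else ⊥

def CL (L : Type*) [CompleteLattice L] : Set L := {x | IsAtom x ∨ x = ⊥ ∨ x = ⊤}

def kappa {L : Type*} [CompleteLattice L] (x : L) : Set L :=
  {u | u ∈ CL L ∧ u ≠ ⊥ ∧ u ≤ x}

noncomputable def Tbar {L : Type*} [CompleteLattice L] (T : L → L → L) (x y : L) : L :=
  ⨆ u ∈ kappa x, ⨆ v ∈ kappa y, T u v

def IsTnormOn {L : Type*} [PartialOrder L] [OrderTop L] (C : Set L) (T : L → L → L) : Prop :=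
  (∀ x ∈ C, ∀ y ∈ C, T x y ∈ C) ∧
  (∀ x ∈ C, ∀ y ∈ C, ∀ z ∈ C, y ≤ z → T x y ≤ T x z) ∧
  (∀ x ∈ C, ∀ y ∈ C, T x y = T y x) ∧
  (∀ x ∈ C, ∀ y ∈ C, ∀ z ∈ C, T x (T y z) = T (T x y) z) ∧
  (∀ x ∈ C, T x ⊤ = x)

open Classical in
noncomputable def Talpha {L : Type*} [CompleteLattice L] (α : Set L) (x y : L) : L :=
  if x = ⊤ ∨ y = ⊤ then x ⊓ y else if x = y ∧ x ∈ α then x else ⊥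

def LeftSemicts {L : Type*} [CompleteLattice L] (T : L → L → L) : Prop :=
  ∀ a : L, ∀ S : Set L, sSup S ≠ ⊤ → T a (sSup S) = ⨆ x ∈ S, T a x

/-! Everything is governed by the set `α` of idempotent atoms. On `C(L)`, a t-norm `T` agrees
with `Talpha α`: for atoms `T u v ≤ u ⊓ v`, so `T u v = ⊥` unless `u = v`, and `T u u ∈ {⊥, u}`.
A left-semicontinuous t-norm on `L` equals its own `T̄`, so it is `T̄` of `Talpha α`, and
left-semicontinuity forces the diagonal condition. Conversely, the diagonal condition says that
each `u ∈ α` with `u ≤ ⋁S ≠ ⊤` lies below some member of `S`; then, away from `⊤`,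
`T̄ x y = ⋁{u ∈ α | u ≤ x ⊓ y}`, which is associative and left-semicontinuous. -/

section Kappa

variable {L : Type*} [CompleteLattice L]

lemma sSup_kappa [IsAtomistic L] (x : L) : sSup (kappa x) = x :=
  le_antisymm (sSup_le fun _ hu => hu.2.2) <| (sSup_atoms_le_eq x).ge.trans <|
    sSup_le_sSup fun _ hu => ⟨Or.inl hu.1, hu.1.ne_bot, hu.2⟩

lemma top_mem_CL : (⊤ : L) ∈ CL L := Or.inr (Or.inr rfl)

lemma top_mem_kappa_top [Nontrivial L] : (⊤ : L) ∈ kappa ⊤ :=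
  ⟨Or.inr (Or.inr rfl), top_ne_bot, le_rfl⟩

lemma kappa_mono {x y : L} (h : x ≤ y) : kappa x ⊆ kappa y :=
  fun _ hu => ⟨hu.1, hu.2.1, hu.2.2.trans h⟩

end Kappa

section Tbar

variable {L : Type*} [CompleteLattice L] {T : L → L → L}

lemma tbar_congr {T' : L → L → L} (h : ∀ u ∈ CL L, ∀ v ∈ CL L, T u v = T' u v) :
    Tbar T = Tbar T' :=
  funext₂ fun _ _ => biSup_congr fun u hu => biSup_congr fun v hv => h u hu.1 v hv.1

lemma tbar_comm (h : ∀ u v, T u v = T v u) (x y : L) : Tbar T x y = Tbar T y x := by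
  unfold Tbar
  rw [iSup₂_comm]
  simp only [h]

lemma tbar_mono_right (x : L) : Monotone (Tbar T x) := fun _ _ hyz =>
  iSup₂_mono fun _ _ => biSup_mono fun _ hv => kappa_mono hyz hv

lemma tbar_le_left (h : ∀ u v, T u v ≤ u) (x y : L) : Tbar T x y ≤ x :=
  iSup₂_le fun u hu => iSup₂_le fun v _ => (h u v).trans hu.2.2

lemma tbar_top_left [IsAtomistic L] [Nontrivial L] (htop : ∀ v, T ⊤ v = v)
    (hle : ∀ u v, T u v ≤ v) (y : L) : Tbar T ⊤ y = y := by
  refine le_antisymm (iSup₂_le fun u _ => iSup₂_le fun v hv => (hle u v).trans hv.2.2) ?_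
  calc y = ⨆ v ∈ kappa y, T ⊤ v := by simp only [htop, ← sSup_eq_iSup, sSup_kappa]
    _ ≤ Tbar T ⊤ y := le_biSup (fun u => ⨆ v ∈ kappa y, T u v) top_mem_kappa_top

end Tbar

section Talpha

variable {L : Type*} [CompleteLattice L] (α : Set L)

lemma talpha_comm (x y : L) : Talpha α x y = Talpha α y x := by
  unfold Talpha
  split_ifs <;> grind [inf_comm]

lemma talpha_le_left (x y : L) : Talpha α x y ≤ x := by
  unfold Talpha
  split_ifs
  exacts [inf_le_left, le_rfl, bot_le]

lemma talpha_top_left (y : L) : Talpha α ⊤ y = y := by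
  simp [Talpha]

lemma talpha_self_of_mem {u : L} (hu : u ∈ α) : Talpha α u u = u := by
  simp [Talpha, hu]

open Classical in
lemma talpha_of_ne_top {x y : L} (hx : x ≠ ⊤) (hy : y ≠ ⊤) :
    Talpha α x y = if x = y ∧ x ∈ α then x else ⊥ :=
  if_neg (not_or.2 ⟨hx, hy⟩)

lemma talpha_mem_CL {x y : L} (hx : x ∈ CL L) (hy : y ∈ CL L) : Talpha α x y ∈ CL L := by
  unfold Talpha
  split_ifs with htop
  · rcases htop with rfl | rfl
    · rwa [top_inf_eq]
    · rwa [inf_top_eq]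
  · exact hx
  · exact Or.inr (Or.inl rfl)

end Talpha

section Tnorm

variable {L : Type*} [CompleteLattice L] {T : L → L → L}

lemma IsTnorm.le_inf (hT : IsTnorm T) (x y : L) : T x y ≤ x ⊓ y :=
  _root_.le_inf ((hT.1 x le_top).trans_eq (hT.2.2.2 x))
    (hT.2.1 x y ▸ (hT.1 y le_top).trans_eq (hT.2.2.2 y))

lemma IsTnormOn.le_inf {C : Set L} (hT : IsTnormOn C T) (htop : ⊤ ∈ C) {x y : L} (hx : x ∈ C)
    (hy : y ∈ C) : T x y ≤ x ⊓ y :=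
  _root_.le_inf ((hT.2.1 x hx y hy ⊤ htop le_top).trans_eq (hT.2.2.2.2 x hx))
    (hT.2.2.1 x hx y hy ▸ (hT.2.1 y hy x hx ⊤ htop le_top).trans_eq (hT.2.2.2.2 y hy))

lemma IsTnorm.isTnormOn_of_eqOn {C : Set L} {T' : L → L → L} (hT : IsTnorm T) (htop : ⊤ ∈ C)
    (hC : ∀ x ∈ C, ∀ y ∈ C, T' x y ∈ C) (h : ∀ x ∈ C, ∀ y ∈ C, T x y = T' x y) :
    IsTnormOn C T' := by
  refine ⟨hC, fun x hx y hy z hz hyz => ?_, fun x hx y hy => ?_, fun x hx y hy z hz => ?_,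
    fun x hx => ?_⟩
  · rw [← h x hx y hy, ← h x hx z hz]
    exact hT.1 x hyz
  · rw [← h x hx y hy, ← h y hy x hx, hT.2.1]
  · rw [← h y hy z hz, ← h x hx _ ((h y hy z hz).symm ▸ hC y hy z hz), ← h x hx y hy,
      ← h _ ((h x hx y hy).symm ▸ hC x hx y hy) z hz, hT.2.2.1]
  · rw [← h x hx ⊤ htop, hT.2.2.2]

lemma LeftSemicts.eq_iSup_kappa [IsAtomistic L] [Nontrivial L] (hlsc : LeftSemicts T)
    (hmono : ∀ x, Monotone (T x)) (x y : L) : T x y = ⨆ v ∈ kappa y, T x v := by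
  refine le_antisymm ?_ (iSup₂_le fun v hv => hmono x hv.2.2)
  rcases eq_or_ne y ⊤ with rfl | hy
  · exact le_biSup (T x) top_mem_kappa_top
  · conv_lhs => rw [← sSup_kappa y]
    exact (hlsc x _ ((sSup_kappa y).symm ▸ hy)).le

lemma IsTnorm.tbar_eq_self [IsAtomistic L] [Nontrivial L] (hT : IsTnorm T)
    (hlsc : LeftSemicts T) : Tbar T = T := by
  funext x y
  calc Tbar T x y = ⨆ u ∈ kappa x, T y u := by
        simp only [Tbar, ← hlsc.eq_iSup_kappa hT.1, hT.2.1 _ y]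
    _ = T x y := by rw [← hlsc.eq_iSup_kappa hT.1, hT.2.1]

lemma IsTnorm.apply_self_eq_bot (hT : IsTnorm T) (hlsc : LeftSemicts T)
    {S : Set L} (hS : sSup S ≠ ⊤) {u : L} (hu : IsAtom u) (huS : u ≤ sSup S)
    (hnot : ∀ x ∈ S, ¬ u ≤ x) : T u u = ⊥ :=
  le_bot_iff.mp <| calc
    T u u ≤ T u (sSup S) := hT.1 u huS
    _ = ⨆ x ∈ S, T u x := hlsc u S hS
    _ ≤ ⊥ := iSup₂_le fun x hx =>
      (hT.le_inf u x).trans (hu.not_le_iff_disjoint.mp (hnot x hx)).eq_bot.le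

end Tnorm

section Agreement

variable {L : Type*} [CompleteLattice L]

def idempotentAtoms (T : L → L → L) : Set L := {u | IsAtom u ∧ T u u = u}

lemma eqOn_talpha_idempotentAtoms {T : L → L → L} (hleft : ∀ v ∈ CL L, T ⊤ v = v)
    (hright : ∀ u ∈ CL L, T u ⊤ = u) (hle : ∀ u ∈ CL L, ∀ v ∈ CL L, T u v ≤ u ⊓ v) :
    ∀ u ∈ CL L, ∀ v ∈ CL L, T u v = Talpha (idempotentAtoms T) u v := by
  intro u hu v hv
  have huv := hle u hu v hv
  unfold Talpha
  split_ifs with htop hdiag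
  · rcases htop with rfl | rfl
    · rw [hleft v hv, top_inf_eq]
    · rw [hright u hu, inf_top_eq]
  · obtain ⟨rfl, -, huu⟩ := hdiag
    exact huu
  · push Not at htop
    rcases hu with hua | rfl | rfl
    · rcases hv with hva | rfl | rfl
      · rcases eq_or_ne u v with rfl | hne
        · exact (hua.le_iff.mp (huv.trans inf_le_left)).resolve_right fun h => hdiag ⟨rfl, hua, h⟩
        · exact le_bot_iff.mp (huv.trans (hua.disjoint_of_ne hva hne).eq_bot.le)
      · exact le_bot_iff.mp (huv.trans inf_le_right)
      · exact absurd rfl htop.2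
    · exact le_bot_iff.mp (huv.trans inf_le_left)
    · exact absurd rfl htop.1

end Agreement

section SupBelowIn

variable {L : Type*} [CompleteLattice L] {α : Set L}

def supBelowIn (α : Set L) (z : L) : L := sSup {u | u ∈ α ∧ u ≤ z}

def IsSSupPrimeOfNeTop (u : L) : Prop :=
  ∀ S : Set L, sSup S ≠ ⊤ → u ≤ sSup S → ∃ x ∈ S, u ≤ x

lemma supBelowIn_le (z : L) : supBelowIn α z ≤ z := sSup_le fun _ hu => hu.2

lemma le_supBelowIn {u z : L} (hu : u ∈ α) (h : u ≤ z) : u ≤ supBelowIn α z := le_sSup ⟨hu, h⟩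

lemma supBelowIn_mono : Monotone (supBelowIn α) :=
  fun _ _ h => sSup_le_sSup fun _ hu => ⟨hu.1, hu.2.trans h⟩

lemma le_of_le_supBelowIn (hα : ∀ u ∈ α, IsSSupPrimeOfNeTop u) {u z : L} (hz : z ≠ ⊤)
    (hu : u ∈ α) (h : u ≤ supBelowIn α z) : u ≤ z :=
  have ⟨_, hx, hux⟩ := hα u hu _ (ne_top_of_le_ne_top hz (supBelowIn_le z)) h
  hux.trans hx.2

lemma supBelowIn_inf_supBelowIn (hα : ∀ u ∈ α, IsSSupPrimeOfNeTop u) {w : L} (hw : w ≠ ⊤)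
    (x : L) : supBelowIn α (x ⊓ supBelowIn α w) = supBelowIn α (x ⊓ w) := by
  refine le_antisymm (sSup_le fun u ⟨hu, hle⟩ => le_supBelowIn hu ?_)
    (sSup_le fun u ⟨hu, hle⟩ => le_supBelowIn hu ?_)
  · exact le_inf (hle.trans inf_le_left) (le_of_le_supBelowIn hα hw hu (hle.trans inf_le_right))
  · exact le_inf (hle.trans inf_le_left) (le_supBelowIn hu (hle.trans inf_le_right))

lemma supBelowIn_inf_sSup (hα : ∀ u ∈ α, IsSSupPrimeOfNeTop u) (a : L) {S : Set L}
    (hS : sSup S ≠ ⊤) : supBelowIn α (a ⊓ sSup S) = ⨆ x ∈ S, supBelowIn α (a ⊓ x) := by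
  refine le_antisymm (sSup_le fun u ⟨hu, hle⟩ => ?_)
    (iSup₂_le fun x hx => supBelowIn_mono (inf_le_inf_left a (le_sSup hx)))
  obtain ⟨x, hx, hux⟩ := hα u hu S hS (hle.trans inf_le_right)
  exact le_iSup₂_of_le x hx (le_supBelowIn hu (le_inf (hle.trans inf_le_left) hux))

end SupBelowIn

section TbarTalpha

variable {L : Type*} [CompleteLattice L] {α : Set L}

lemma tbar_talpha_of_ne_top (hα : ∀ u ∈ α, IsAtom u) {x y : L} (hx : x ≠ ⊤) (hy : y ≠ ⊤) :
    Tbar (Talpha α) x y = supBelowIn α (x ⊓ y) := by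
  refine le_antisymm (iSup₂_le fun u hu => iSup₂_le fun v hv => ?_) (sSup_le fun u ⟨hu, hle⟩ => ?_)
  · rw [talpha_of_ne_top α (ne_top_of_le_ne_top hx hu.2.2) (ne_top_of_le_ne_top hy hv.2.2)]
    split_ifs with h
    · exact le_supBelowIn h.2 (le_inf hu.2.2 (h.1 ▸ hv.2.2))
    · exact bot_le
  · have hκ {w : L} (h : u ≤ w) : u ∈ kappa w := ⟨Or.inl (hα u hu), (hα u hu).ne_bot, h⟩
    calc u = Talpha α u u := (talpha_self_of_mem α hu).symm
      _ ≤ Tbar (Talpha α) x y := le_iSup₂_of_le u (hκ (hle.trans inf_le_left)) <|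
          le_iSup₂_of_le u (hκ (hle.trans inf_le_right)) le_rfl

variable [IsAtomistic L] [Nontrivial L]

lemma tbar_talpha_top_left (y : L) : Tbar (Talpha α) ⊤ y = y :=
  tbar_top_left (talpha_top_left α) (fun u v => talpha_comm α u v ▸ talpha_le_left α v u) y

lemma tbar_talpha_top_right (x : L) : Tbar (Talpha α) x ⊤ = x :=
  tbar_comm (talpha_comm α) x ⊤ ▸ tbar_talpha_top_left x

lemma isTnorm_tbar_talpha (hatom : ∀ u ∈ α, IsAtom u) (hprime : ∀ u ∈ α, IsSSupPrimeOfNeTop u) :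
    IsTnorm (Tbar (Talpha α)) := by
  refine ⟨tbar_mono_right, tbar_comm (talpha_comm α), fun x y z => ?_, tbar_talpha_top_right⟩
  rcases eq_or_ne x ⊤ with rfl | hx
  · rw [tbar_talpha_top_left, tbar_talpha_top_left]
  rcases eq_or_ne z ⊤ with rfl | hz
  · rw [tbar_talpha_top_right, tbar_talpha_top_right]
  rcases eq_or_ne y ⊤ with rfl | hy
  · rw [tbar_talpha_top_left, tbar_talpha_top_right]
  have hle := tbar_le_left (talpha_le_left α)
  rw [tbar_talpha_of_ne_top hatom hx (ne_top_of_le_ne_top hy (hle y z)),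
    tbar_talpha_of_ne_top hatom (ne_top_of_le_ne_top hx (hle x y)) hz,
    tbar_talpha_of_ne_top hatom hy hz, tbar_talpha_of_ne_top hatom hx hy,
    supBelowIn_inf_supBelowIn hprime (ne_top_of_le_ne_top hy inf_le_left),
    inf_comm (supBelowIn α (x ⊓ y)) z,
    supBelowIn_inf_supBelowIn hprime (ne_top_of_le_ne_top hx inf_le_left), inf_comm z, inf_assoc]

lemma leftSemicts_tbar_talpha (hatom : ∀ u ∈ α, IsAtom u)
    (hprime : ∀ u ∈ α, IsSSupPrimeOfNeTop u) : LeftSemicts (Tbar (Talpha α)) := by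
  intro a S hS
  rcases eq_or_ne a ⊤ with rfl | ha
  · simp only [tbar_talpha_top_left, sSup_eq_iSup]
  have hxS (x : L) (hx : x ∈ S) : x ≠ ⊤ := ne_top_of_le_ne_top hS (le_sSup hx)
  rw [tbar_talpha_of_ne_top hatom ha hS, supBelowIn_inf_sSup hprime a hS]
  exact biSup_congr fun x hx => (tbar_talpha_of_ne_top hatom ha (hxS x hx)).symm

end TbarTalpha

section Characterization

variable {L : Type*} [CompleteLattice L] [IsAtomistic L] [Nontrivial L] {T : L → L → L}

theorem IsTnorm.exists_eq_tbar_of_leftSemicts (hT : IsTnorm T) (hlsc : LeftSemicts T) :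
    ∃ T' : L → L → L, IsTnormOn (CL L) T' ∧ T = Tbar T' ∧
      ∀ S : Set L, sSup S ≠ ⊤ → ∀ u : L, IsAtom u → u ≤ sSup S →
        (∀ x ∈ S, ¬ u ≤ x) → T' u u = ⊥ := by
  have hCL := eqOn_talpha_idempotentAtoms (fun v _ => hT.2.1 ⊤ v ▸ hT.2.2.2 v)
    (fun u _ => hT.2.2.2 u) fun u _ v _ => hT.le_inf u v
  refine ⟨Talpha (idempotentAtoms T),
    hT.isTnormOn_of_eqOn top_mem_CL (fun _ hx _ hy => talpha_mem_CL _ hx hy) hCL, ?_, ?_⟩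
  · rw [← tbar_congr hCL, hT.tbar_eq_self hlsc]
  · intro S hS u hu huS hnot
    rw [← hCL u (Or.inl hu) u (Or.inl hu)]
    exact hT.apply_self_eq_bot hlsc hS hu huS hnot

theorem IsTnormOn.isTnorm_tbar_and_leftSemicts (hT : IsTnormOn (CL L) T)
    (hdiag : ∀ S : Set L, sSup S ≠ ⊤ → ∀ u : L, IsAtom u → u ≤ sSup S →
      (∀ x ∈ S, ¬ u ≤ x) → T u u = ⊥) :
    IsTnorm (Tbar T) ∧ LeftSemicts (Tbar T) := by
  have hCL := eqOn_talpha_idempotentAtoms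
    (fun v hv => hT.2.2.1 ⊤ top_mem_CL v hv ▸ hT.2.2.2.2 v hv) hT.2.2.2.2
    fun _ hu _ hv => hT.le_inf top_mem_CL hu hv
  have hatom : ∀ u ∈ idempotentAtoms T, IsAtom u := fun _ hu => hu.1
  have hprime : ∀ u ∈ idempotentAtoms T, IsSSupPrimeOfNeTop u := by
    intro u ⟨hu, huu⟩ S hS huS
    by_contra! hnot
    exact hu.ne_bot (huu.symm.trans (hdiag S hS u hu huS hnot))
  rw [tbar_congr hCL]
  exact ⟨isTnorm_tbar_talpha hatom hprime, leftSemicts_tbar_talpha hatom hprime⟩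

end Characterization

theorem stmt10 {L : Type*} [CompleteLattice L] [IsAtomistic L]
    (hlen : ∃ x : L, x ≠ ⊥ ∧ x ≠ ⊤) (Td : L → L → L) :
    (IsTnorm Td ∧ LeftSemicts Td) ↔
      ∃ T : L → L → L, IsTnormOn (CL L) T ∧ Td = Tbar T ∧
        ∀ S : Set L, sSup S ≠ ⊤ → ∀ u : L, IsAtom u → u ≤ sSup S →
          (∀ x ∈ S, ¬ u ≤ x) → T u u = ⊥ := by
  obtain ⟨x, -, hx⟩ := hlen
  have : Nontrivial L := ⟨⟨x, ⊤, hx⟩⟩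
  constructor
  · rintro ⟨hT, hlsc⟩
    exact hT.exists_eq_tbar_of_leftSemicts hlsc
  · rintro ⟨T, hT, rfl, hdiag⟩
    exact hT.isTnorm_tbar_and_leftSemicts hdiag
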